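/- arXiv:1409.2835 — 10 statements merged into one kernel-verified Lean document; each statement's English description precedes it below -/
import Mathlib

section
/- If a standard interference mapping J : (ℝ≥0)^M → (ℝ>0)^M has a fixed point, then the fixed point is unique. -/
/-!
Let `x, y` be positive fixed points and let `α = x j / y j` be the largest of the ratios
`x i / y i`, so that `x ≤ α y`. If `α > 1`, monotonicity and scalability give
`x j = J x j ≤ J (α y) j < α J y j = α y j = x j`, which is absurd. Hence `x ≤ y`, and by
symmetry `x = y`.
-/

section

variable {ι : Type*} [Finite ι] {J : (ι → ℝ) → ι → ℝ}

theorem le_of_fixedPoint_of_scalable_of_monotone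
    (hscal : ∀ x : ι → ℝ, (∀ i, 0 ≤ x i) → ∀ α : ℝ, 1 < α →
      ∀ i, J (fun j => α * x j) i < α * J x i)
    (hmono : ∀ x y : ι → ℝ, (∀ i, 0 ≤ y i) → (∀ i, y i ≤ x i) → ∀ i, J y i ≤ J x i)
    {x y : ι → ℝ} (hx : ∀ i, 0 ≤ x i) (hy : ∀ i, 0 < y i) (hfx : J x = x) (hfy : J y = y) :
    ∀ i, x i ≤ y i := by
  cases isEmpty_or_nonempty ι with
  | inl _ => exact isEmptyElim
  | inr _ =>
    obtain ⟨j, hj⟩ := Finite.exists_max fun i => x i / y i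
    set α := x j / y j
    have hle : ∀ i, x i ≤ α * y i := fun i => (div_le_iff₀ (hy i)).mp (hj i)
    have hαj : α * y j = x j := div_mul_cancel₀ _ (hy j).ne'
    rcases le_or_gt α 1 with hα | hα
    · exact fun i => (hle i).trans (mul_le_of_le_one_left (hy i).le hα)
    · have : x j < x j :=
        calc x j = J x j := by rw [hfx]
          _ ≤ J (fun k => α * y k) j := hmono _ x hx hle j
          _ < α * J y j := hscal y (fun i => (hy i).le) α hα j
          _ = x j := by rw [hfy, hαj]
      exact absurd this (lt_irrefl _)

end

theorem interference_fixed_point_unique_general (M : ℕ)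
    (J : (Fin M → ℝ) → (Fin M → ℝ))
    (hscal : ∀ x : Fin M → ℝ, (∀ i, 0 ≤ x i) → ∀ α : ℝ, 1 < α →
      ∀ i, J (fun j => α * x j) i < α * J x i)
    (hmono : ∀ x y : Fin M → ℝ, (∀ i, 0 ≤ y i) → (∀ i, y i ≤ x i) →
      ∀ i, J y i ≤ J x i)
    (x₁ x₂ : Fin M → ℝ)
    (hx₁ : ∀ i, 0 < x₁ i) (hx₂ : ∀ i, 0 < x₂ i)
    (hf₁ : J x₁ = x₁) (hf₂ : J x₂ = x₂) :
    x₁ = x₂ :=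
  funext fun i => le_antisymm
    (le_of_fixedPoint_of_scalable_of_monotone hscal hmono (fun i => (hx₁ i).le) hx₂ hf₁ hf₂ i)
    (le_of_fixedPoint_of_scalable_of_monotone hscal hmono (fun i => (hx₂ i).le) hx₁ hf₂ hf₁ i)

theorem interference_fixed_point_unique (M : ℕ)
    (J : (Fin M → ℝ) → (Fin M → ℝ))
    (hpos : ∀ x : Fin M → ℝ, (∀ i, 0 ≤ x i) → ∀ i, 0 < J x i)
    (hscal : ∀ x : Fin M → ℝ, (∀ i, 0 ≤ x i) → ∀ α : ℝ, 1 < α →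
      ∀ i, J (fun j => α * x j) i < α * J x i)
    (hmono : ∀ x y : Fin M → ℝ, (∀ i, 0 ≤ y i) → (∀ i, y i ≤ x i) →
      ∀ i, J y i ≤ J x i)
    (x₁ x₂ : Fin M → ℝ)
    (hx₁ : ∀ i, 0 < x₁ i) (hx₂ : ∀ i, 0 < x₂ i)
    (hf₁ : J x₁ = x₁) (hf₂ : J x₂ = x₂) :
    x₁ = x₂ :=
  interference_fixed_point_unique_general M J hscal hmono x₁ x₂ hx₁ hx₂ hf₁ hf₂
end

section
/- A standard interference mapping J : (ℝ≥0)^M → (ℝ>0)^M has a fixed point if there exists x' with J(x') ≤ x' componentwise. -/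
/-! By monotonicity, `J` maps the order interval `[0, x']` into itself: `J z ≥ 0` by positivity and
`J z ≤ J x' ≤ x'`. Since `ℝ^M` is a conditionally complete lattice, this interval is a complete
lattice, so Knaster–Tarski gives a fixed point, which is strictly positive because `J` is. -/

open Set

theorem MonotoneOn.exists_fixedPoint_Icc {α : Type*} [ConditionallyCompleteLattice α]
    {f : α → α} {a b : α} (hab : a ≤ b) (hf : MonotoneOn f (Icc a b))
    (ha : a ≤ f a) (hb : f b ≤ b) : ∃ x ∈ Icc a b, f x = x := by
  have : Fact (a ≤ b) := ⟨hab⟩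
  have hmaps : MapsTo f (Icc a b) (Icc a b) :=
    (hf.mapsTo_Icc).mono_right (Icc_subset_Icc ha hb)
  let g : Icc a b →o Icc a b :=
    ⟨hmaps.restrict f _ _, fun x y hxy => hf x.2 y.2 hxy⟩
  exact ⟨g.lfp, g.lfp.2, congrArg Subtype.val g.map_lfp⟩

theorem interference_fixed_point_exists_general (M : ℕ)
    (J : (Fin M → ℝ) → (Fin M → ℝ))
    (hpos : ∀ x : Fin M → ℝ, (∀ i, 0 ≤ x i) → ∀ i, 0 < J x i)
    (hmono : ∀ x y : Fin M → ℝ, (∀ i, 0 ≤ y i) → (∀ i, y i ≤ x i) →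
      ∀ i, J y i ≤ J x i)
    (x' : Fin M → ℝ) (hx' : ∀ i, 0 ≤ x' i) (hle : ∀ i, J x' i ≤ x' i) :
    ∃ x : Fin M → ℝ, (∀ i, 0 < x i) ∧ J x = x := by
  have hJmono : MonotoneOn J (Icc 0 x') := fun y hy x _ hyx => hmono x y hy.1 hyx
  have hJ0 : 0 ≤ J 0 := fun i => (hpos 0 (fun _ => le_rfl) i).le
  obtain ⟨x, hx, hfix⟩ := hJmono.exists_fixedPoint_Icc hx' hJ0 hle
  exact ⟨x, fun i => hfix ▸ hpos x hx.1 i, hfix⟩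

theorem interference_fixed_point_exists (M : ℕ)
    (J : (Fin M → ℝ) → (Fin M → ℝ))
    (hpos : ∀ x : Fin M → ℝ, (∀ i, 0 ≤ x i) → ∀ i, 0 < J x i)
    (hscal : ∀ x : Fin M → ℝ, (∀ i, 0 ≤ x i) → ∀ α : ℝ, 1 < α →
      ∀ i, J (fun j => α * x j) i < α * J x i)
    (hmono : ∀ x y : Fin M → ℝ, (∀ i, 0 ≤ y i) → (∀ i, y i ≤ x i) →
      ∀ i, J y i ≤ J x i)
    (x' : Fin M → ℝ) (hx' : ∀ i, 0 ≤ x' i) (hle : ∀ i, J x' i ≤ x' i) :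
    ∃ x : Fin M → ℝ, (∀ i, 0 < x i) ∧ J x = x :=
  interference_fixed_point_exists_general M J hpos hmono x' hx' hle
end

section
/- If J is a standard interference mapping with a fixed point x*, then the sequence defined by x_{n+1} = J(x_n) with x₁ = 0 is componentwise monotonically increasing and converges to x*. -/
/-!
By monotonicity the orbit of `0` increases and stays below every nonnegative fixed point, so it
converges to its supremum `L`. Scalability lets `J` pass to this limit from below, so `L` is a
fixed point; it is positive, and comparing two fixed points through their largest coordinate
ratio shows that a positive fixed point dominates every nonnegative one, whence `L = x*`.
-/

open Filter Topology Function

structure IsStandardInterference {ι : Type*} (J : (ι → ℝ) → ι → ℝ) : Prop where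
  pos : ∀ x, 0 ≤ x → ∀ i, 0 < J x i
  scalable : ∀ x, 0 ≤ x → ∀ α : ℝ, 1 < α → ∀ i, J (α • x) i < α * J x i
  mono : ∀ ⦃x y⦄, 0 ≤ x → x ≤ y → J x ≤ J y

namespace IsStandardInterference

variable {ι : Type*} {J : (ι → ℝ) → ι → ℝ} (hJ : IsStandardInterference J)
include hJ

theorem lt_mul_of_le_smul {x y : ι → ℝ} {α : ℝ} (hx : 0 ≤ x) (hy : 0 ≤ y) (hα : 1 < α)
    (hyx : y ≤ α • x) (i : ι) : J y i < α * J x i :=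
  (hJ.mono hy hyx i).trans_lt (hJ.scalable x hx α hα i)

/-- With `α = max_i y i / x i`, if `α > 1` then `y ≤ α • x` with equality at the maximizing
index, where scalability gives `y i = J y i < α * J x i = α * x i`. -/
theorem le_of_isFixedPt [Finite ι] {x y : ι → ℝ} (hx : ∀ i, 0 < x i) (hy : 0 ≤ y)
    (hfx : IsFixedPt J x) (hfy : IsFixedPt J y) : y ≤ x := by
  intro k
  by_contra! hk
  have := Fintype.ofFinite ι
  obtain ⟨i, -, hmax⟩ := Finset.exists_max_image Finset.univ (fun i => y i / x i) ⟨k, by simp⟩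
  set α := y i / x i
  have hα : 1 < α := ((one_lt_div (hx k)).2 hk).trans_le (hmax k (by simp))
  have hyx : y ≤ α • x := fun j => by
    simpa [div_le_iff₀ (hx j)] using hmax j (Finset.mem_univ j)
  have hlt := hJ.lt_mul_of_le_smul (fun j => (hx j).le) hy hα hyx i
  rw [hfx, hfy, div_mul_cancel₀ _ (hx i).ne'] at hlt
  exact hlt.false

theorem iterate_nonneg {x : ι → ℝ} (hx : 0 ≤ x) (n : ℕ) : 0 ≤ J^[n] x := by
  induction n with
  | zero => exact hx
  | succ n ih => exact fun i => by rw [iterate_succ_apply']; exact (hJ.pos _ ih i).le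

theorem monotone_iterate_zero : Monotone fun n => J^[n] 0 := by
  refine monotone_nat_of_le_succ fun n => ?_
  induction n with
  | zero => exact fun i => (hJ.pos 0 le_rfl i).le
  | succ n ih =>
    rw [iterate_succ_apply', iterate_succ_apply' _ (n + 1)]
    exact hJ.mono (hJ.iterate_nonneg le_rfl n) ih

theorem iterate_zero_le_of_isFixedPt {x : ι → ℝ} (hx : 0 ≤ x) (hfx : IsFixedPt J x) (n : ℕ) :
    J^[n] 0 ≤ x := by
  induction n with
  | zero => exact hx
  | succ n ih =>
    rw [iterate_succ_apply', ← hfx]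
    exact hJ.mono (hJ.iterate_nonneg le_rfl n) ih

/-- For `α > 1` eventually `L ≤ α • x n`, so `J L < α * J (x n) ≤ α * L`. -/
theorem map_le_of_tendsto [Finite ι] {x : ℕ → ι → ℝ} {L : ι → ℝ} (hx : ∀ n, 0 ≤ x n)
    (hL : ∀ i, 0 < L i) (hlim : Tendsto x atTop (𝓝 L)) (hbound : ∀ n, J (x n) ≤ L) :
    J L ≤ L := by
  intro i
  refine le_of_forall_gt_imp_ge_of_dense fun c hc => ?_
  set α := c / L i
  have hα : 1 < α := (one_lt_div (hL i)).2 hc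
  have hev : ∀ᶠ n in atTop, L ≤ α • x n := by
    refine eventually_all.2 fun j => ?_
    have hlt : L j < α * L j := lt_mul_left (hL j) hα
    exact ((tendsto_pi_nhds.1 hlim j).const_mul α).eventually (eventually_gt_nhds hlt)
      |>.mono fun _ h => h.le
  obtain ⟨n, hn⟩ := hev.exists
  calc J L i ≤ α * J (x n) i :=
        (hJ.lt_mul_of_le_smul (hx n) (fun j => (hL j).le) hα hn i).le
    _ ≤ α * L i := mul_le_mul_of_nonneg_left (hbound n i) (by positivity)
    _ = c := div_mul_cancel₀ _ (hL i).ne'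

theorem tendsto_iterate_zero [Finite ι] {x : ι → ℝ} (hx : 0 ≤ x) (hfx : IsFixedPt J x) :
    Tendsto (fun n => J^[n] 0) atTop (𝓝 x) := by
  have hbdd : BddAbove (Set.range fun n => J^[n] 0) :=
    ⟨x, Set.forall_mem_range.2 (hJ.iterate_zero_le_of_isFixedPt hx hfx)⟩
  set L := ⨆ n, J^[n] (0 : ι → ℝ)
  have hlim : Tendsto (fun n => J^[n] 0) atTop (𝓝 L) :=
    tendsto_atTop_ciSup hJ.monotone_iterate_zero hbdd
  have hle : ∀ n, J^[n] 0 ≤ L := fun n => le_ciSup hbdd n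
  have hLpos : ∀ i, 0 < L i := fun i => (hJ.pos 0 le_rfl i).trans_le (hle 1 i)
  have hnonneg : ∀ n, 0 ≤ J^[n] (0 : ι → ℝ) := hJ.iterate_nonneg le_rfl
  have hLfix : IsFixedPt J L := by
    refine le_antisymm (hJ.map_le_of_tendsto hnonneg hLpos hlim fun n => ?_) (ciSup_le fun n => ?_)
    · simpa only [iterate_succ_apply'] using hle (n + 1)
    · cases n with
      | zero => exact fun i => (hJ.pos L (fun j => (hLpos j).le) i).le
      | succ n => rw [iterate_succ_apply']; exact hJ.mono (hnonneg n) (hle n)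
  have hLx : L = x :=
    le_antisymm (ciSup_le (hJ.iterate_zero_le_of_isFixedPt hx hfx))
      (hJ.le_of_isFixedPt hLpos hx hLfix hfx)
  exact hLx ▸ hlim

end IsStandardInterference

theorem interference_iteration_from_zero (M : ℕ)
    (J : (Fin M → ℝ) → (Fin M → ℝ))
    (hpos : ∀ x : Fin M → ℝ, (∀ i, 0 ≤ x i) → ∀ i, 0 < J x i)
    (hscal : ∀ x : Fin M → ℝ, (∀ i, 0 ≤ x i) → ∀ α : ℝ, 1 < α →
      ∀ i, J (fun j => α * x j) i < α * J x i)
    (hmono : ∀ x y : Fin M → ℝ, (∀ i, 0 ≤ y i) → (∀ i, y i ≤ x i) →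
      ∀ i, J y i ≤ J x i)
    (xs : Fin M → ℝ) (hxs : ∀ i, 0 < xs i) (hfix : J xs = xs) :
    (∀ n : ℕ, ∀ i, J^[n] (fun _ => (0:ℝ)) i ≤ J^[n+1] (fun _ => (0:ℝ)) i) ∧
    Filter.Tendsto (fun n => J^[n] (fun _ => (0:ℝ))) Filter.atTop (nhds xs) := by
  have hJ : IsStandardInterference J := ⟨hpos, hscal, fun x y hx hxy => hmono y x hx hxy⟩
  exact ⟨fun n => hJ.monotone_iterate_zero n.le_succ,
    hJ.tendsto_iterate_zero (fun i => (hxs i).le) hfix⟩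
end

section
/- Every concave function I : (ℝ≥0)^M → ℝ>0 is a standard interference function; i.e., it is monotone (x₁ ≥ x₂ implies I(x₁) ≥ I(x₂)) and scalable (α·I(x) > I(α·x) for all α > 1 and x ∈ (ℝ≥0)^M). -/
/-!
Along a ray `t ↦ y + t • (x - y)` a concave function lies below its chord extended past `x`, so
if it decreased from `y` to `x` it would tend to `-∞` along the ray, contradicting positivity;
this gives monotonicity. Scalability is the same extrapolation from `0` to `α • x`, where the
strictly positive value `I 0` makes the inequality strict.
-/

namespace ConcaveOn

variable {E : Type*} [AddCommGroup E] [Module ℝ E] {s : Set E} {f : E → ℝ}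

theorem apply_add_smul_sub_add_le (hf : ConcaveOn ℝ s f) {x y : E} {t : ℝ} (hy : y ∈ s)
    (hp : y + t • (x - y) ∈ s) (ht : 1 ≤ t) :
    f (y + t • (x - y)) + (t - 1) * f y ≤ t * f x := by
  have ht₀ : 0 < t := by linarith
  have hcomb : t⁻¹ • (y + t • (x - y)) + (1 - t⁻¹) • y = x := by
    rw [smul_add, smul_smul, inv_mul_cancel₀ ht₀.ne', one_smul, sub_smul, one_smul]
    abel
  have key := hf.2 hp hy (inv_nonneg.2 ht₀.le) (sub_nonneg.2 (inv_le_one_of_one_le₀ ht))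
    (add_sub_cancel _ _)
  rw [hcomb, smul_eq_mul, smul_eq_mul] at key
  calc f (y + t • (x - y)) + (t - 1) * f y
      = t * (t⁻¹ * f (y + t • (x - y)) + (1 - t⁻¹) * f y) := by field_simp
    _ ≤ t * f x := by gcongr

theorem le_of_bddBelow_of_mem_ray (hf : ConcaveOn ℝ s f) (hbdd : BddBelow (f '' s)) {x y : E}
    (hray : ∀ t : ℝ, 0 ≤ t → y + t • (x - y) ∈ s) : f y ≤ f x := by
  by_contra! hlt
  obtain ⟨B, hB⟩ := hbdd
  have hy : y ∈ s := by simpa using hray 0 le_rfl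
  have hBy : B ≤ f y := hB ⟨y, hy, rfl⟩
  have hgap : 0 < f y - f x := sub_pos.2 hlt
  -- large enough that the extrapolation inequality forces `f` below `B` at `y + t • (x - y)`
  set t := 1 + (f y - B) / (f y - f x)
  have ht : 1 ≤ t := le_add_of_nonneg_right (div_nonneg (sub_nonneg.2 hBy) hgap.le)
  have hp := hray t (by linarith)
  have hBp : B ≤ f (y + t • (x - y)) := hB ⟨_, hp, rfl⟩
  have hext := hf.apply_add_smul_sub_add_le hy hp ht
  have ht_gap : t * (f y - f x) = (f y - f x) + (f y - B) := by
    rw [add_mul, one_mul, div_mul_cancel₀ _ hgap.ne']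
  linarith

theorem apply_smul_lt_mul (hf : ConcaveOn ℝ s f) (h₀ : (0 : E) ∈ s) (hf₀ : 0 < f 0) {x : E}
    {α : ℝ} (hα : 1 < α) (hαx : α • x ∈ s) : f (α • x) < α * f x := by
  have hext := hf.apply_add_smul_sub_add_le (x := x) h₀ (by simpa using hαx) hα.le
  rw [zero_add, sub_zero] at hext
  linarith [mul_pos (sub_pos.2 hα) hf₀]

end ConcaveOn

theorem concave_positive_is_interference (M : ℕ) (I : (Fin M → ℝ) → ℝ)
    (hconc : ConcaveOn ℝ {x : Fin M → ℝ | ∀ i, 0 ≤ x i} I)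
    (hpos : ∀ x : Fin M → ℝ, (∀ i, 0 ≤ x i) → 0 < I x) :
    (∀ x₁ x₂ : Fin M → ℝ, (∀ i, 0 ≤ x₂ i) → (∀ i, x₂ i ≤ x₁ i) →
      I x₂ ≤ I x₁) ∧
    (∀ x : Fin M → ℝ, (∀ i, 0 ≤ x i) → ∀ α : ℝ, 1 < α →
      I (fun j => α * x j) < α * I x) := by
  have hbdd : BddBelow (I '' {x | ∀ i, 0 ≤ x i}) := ⟨0, by
    rintro _ ⟨x, hx, rfl⟩
    exact (hpos x hx).le⟩
  refine ⟨fun x₁ x₂ h₂ hle => ?_, fun x hx α hα => ?_⟩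
  · refine hconc.le_of_bddBelow_of_mem_ray hbdd fun t ht i => ?_
    exact add_nonneg (h₂ i) (mul_nonneg ht (sub_nonneg.2 (hle i)))
  · exact hconc.apply_smul_lt_mul (fun _ => le_rfl) (hpos 0 fun _ => le_rfl) hα
      fun i => mul_nonneg (by linarith) (hx i)
end

section
/- The function f : ℝ>0 → ℝ defined by f(x) = 1 / log₂(1 + 1/x) is concave on the positive reals. -/
/-!
Up to the factor `log 2`, `f` is `g = (log (1 + x⁻¹))⁻¹`, whose derivative is
`(x (x + 1) L²)⁻¹` with `L = log (1 + x⁻¹)`. So `g` is concave as soon as `x (x + 1) L²` is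
increasing, and its derivative `L ((2x + 1) L - 2)` is nonnegative because
`log (1 + x⁻¹) ≥ 2 / (2x + 1)`, the first term of the series
`log (1 + x⁻¹) = ∑ 2 / (2k + 1) · (2x + 1)^-(2k+1)`.
-/

open Set

namespace Real

lemma log_one_add_inv_pos {x : ℝ} (hx : 0 < x) : 0 < log (1 + x⁻¹) :=
  log_pos (by simp [hx])

lemma two_div_two_mul_add_one_le_log_one_add_inv {x : ℝ} (hx : 0 < x) :
    2 / (2 * x + 1) ≤ log (1 + x⁻¹) := by
  simpa [div_eq_mul_inv] using le_hasSum (hasSum_log_one_add_inv hx) 0 fun k _ => by positivity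

lemma hasDerivAt_log_one_add_inv {x : ℝ} (hx : 0 < x) :
    HasDerivAt (fun y => log (1 + y⁻¹)) (-(x * (x + 1))⁻¹) x :=
  (((hasDerivAt_inv hx.ne').const_add 1).log (by positivity)).congr_deriv (by field_simp)

lemma hasDerivAt_inv_log_one_add_inv {x : ℝ} (hx : 0 < x) :
    HasDerivAt (fun y => (log (1 + y⁻¹))⁻¹) (x * (x + 1) * log (1 + x⁻¹) ^ 2)⁻¹ x :=
  ((hasDerivAt_log_one_add_inv hx).fun_inv (log_one_add_inv_pos hx).ne').congr_deriv
    (by field_simp)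

lemma hasDerivAt_mul_add_one_mul_log_one_add_inv_sq {x : ℝ} (hx : 0 < x) :
    HasDerivAt (fun y => y * (y + 1) * log (1 + y⁻¹) ^ 2)
      (log (1 + x⁻¹) * ((2 * x + 1) * log (1 + x⁻¹) - 2)) x :=
  (((hasDerivAt_id' x).fun_mul ((hasDerivAt_id' x).add_const 1)).fun_mul
    ((hasDerivAt_log_one_add_inv hx).fun_pow 2)).congr_deriv (by field_simp; ring)

lemma monotoneOn_mul_add_one_mul_log_one_add_inv_sq :
    MonotoneOn (fun x => x * (x + 1) * log (1 + x⁻¹) ^ 2) (Ioi 0) := by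
  refine monotoneOn_of_hasDerivWithinAt_nonneg (convex_Ioi 0)
    (f' := fun x => log (1 + x⁻¹) * ((2 * x + 1) * log (1 + x⁻¹) - 2)) ?_ ?_ ?_
  · exact fun x hx =>
      (hasDerivAt_mul_add_one_mul_log_one_add_inv_sq hx).continuousAt.continuousWithinAt
  · rw [interior_Ioi]
    exact fun x hx => (hasDerivAt_mul_add_one_mul_log_one_add_inv_sq hx).hasDerivWithinAt
  · rw [interior_Ioi]
    intro x (hx : 0 < x)
    have hlog := two_div_two_mul_add_one_le_log_one_add_inv hx
    rw [div_le_iff₀' (by positivity)] at hlog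
    exact mul_nonneg (log_one_add_inv_pos hx).le (by linarith)

lemma concaveOn_inv_log_one_add_inv : ConcaveOn ℝ (Ioi 0) fun x => (log (1 + x⁻¹))⁻¹ := by
  refine AntitoneOn.concaveOn_of_deriv (convex_Ioi 0) ?_ ?_ ?_
  · exact fun x hx => (hasDerivAt_inv_log_one_add_inv hx).continuousAt.continuousWithinAt
  · rw [interior_Ioi]
    exact fun x hx => (hasDerivAt_inv_log_one_add_inv hx).differentiableAt.differentiableWithinAt
  · rw [interior_Ioi]
    intro x (hx : 0 < x) y hy hxy
    rw [(hasDerivAt_inv_log_one_add_inv hx).deriv, (hasDerivAt_inv_log_one_add_inv hy).deriv]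
    have := log_one_add_inv_pos hx
    exact inv_anti₀ (by positivity) (monotoneOn_mul_add_one_mul_log_one_add_inv_sq hx hy hxy)

end Real

theorem concave_inv_log2_one_add_inv :
    ConcaveOn ℝ (Set.Ioi (0:ℝ))
      (fun x => 1 / (Real.log (1 + 1/x) / Real.log 2)) := by
  refine (Real.concaveOn_inv_log_one_add_inv.smul (Real.log_pos one_lt_two).le).congr
    fun x _ => by simp [div_eq_mul_inv, mul_comm]
end

section
/- For fixed constants g > 0, σ² > 0, B > 0, d > 0, K > 0, and nonnegative weights ν_k g_k ≥ 0, the function of (p_{-i}, y) ∈ (ℝ>0)^{M-1} × ℝ>0 given by d / (B·K·log₂(1 + g/(Σ_k ν_k p_k g_k + y))) is concave. -/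
/-!
With `u x = log (1 + g / x)`, the function `1 / u` is concave on `(0, ∞)` because
`2 u'² ≤ u u''` there, which after clearing denominators is the classical bound
`log (1 + t) ≥ 2 t / (t + 2)` at `t = g / x`. The rate denominator is a positive multiple of
`1 / u` composed with the linear map `(p, y) ↦ ∑ k, ν k gk k p k + y`, which is positive on the
(convex) domain, and concavity is preserved by such compositions and scalings.
-/

open Set Real

theorem concaveOn_inv_of_two_mul_sq_deriv_le {D : Set ℝ} (hD : Convex ℝ D) (hDo : IsOpen D)
    {u u' u'' : ℝ → ℝ} (hpos : ∀ x ∈ D, 0 < u x) (hu : ∀ x ∈ D, HasDerivAt u (u' x) x)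
    (hu' : ∀ x ∈ D, HasDerivAt u' (u'' x) x)
    (hineq : ∀ x ∈ D, 2 * u' x ^ 2 ≤ u x * u'' x) :
    ConcaveOn ℝ D fun x => (u x)⁻¹ := by
  have hderiv : ∀ x ∈ D, HasDerivAt (fun x => (u x)⁻¹) (-u' x / u x ^ 2) x := fun x hx =>
    (hu x hx).inv (hpos x hx).ne'
  have hderiv2 : ∀ x ∈ D, HasDerivAt (fun x => -u' x / u x ^ 2)
      ((2 * u' x ^ 2 - u x * u'' x) / u x ^ 3) x := by
    intro x hx
    have hux := (hpos x hx).ne'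
    refine ((hu' x hx).fun_neg.fun_div ((hu x hx).fun_pow 2) (pow_ne_zero 2 hux)).congr_deriv ?_
    field_simp
    ring
  refine concaveOn_of_hasDerivWithinAt2_nonpos hD (f' := fun x => -u' x / u x ^ 2)
    (f'' := fun x => (2 * u' x ^ 2 - u x * u'' x) / u x ^ 3)
    (fun x hx => (hderiv x hx).continuousAt.continuousWithinAt) ?_ ?_ ?_ <;>
    simp only [hDo.interior_eq]
  · exact fun x hx => (hderiv x hx).hasDerivWithinAt
  · exact fun x hx => (hderiv2 x hx).hasDerivWithinAt
  · exact fun x hx =>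
      div_nonpos_of_nonpos_of_nonneg (by linarith [hineq x hx]) (pow_pos (hpos x hx) 3).le

theorem concaveOn_inv_log_one_add_div {g : ℝ} (hg : 0 < g) :
    ConcaveOn ℝ (Ioi 0) fun x => (log (1 + g / x))⁻¹ := by
  refine concaveOn_inv_of_two_mul_sq_deriv_le (convex_Ioi 0) isOpen_Ioi
    (u' := fun x => -g * (x * (x + g))⁻¹) (u'' := fun x => g * (2 * x + g) / (x * (x + g)) ^ 2)
    (fun x (hx : 0 < x) => log_pos (by simpa using div_pos hg hx)) (fun x (hx : 0 < x) => ?_)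
    (fun x (hx : 0 < x) => ?_) fun x (hx : 0 < x) => ?_
  · refine ((((hasDerivAt_inv hx.ne').const_mul g).const_add 1).log (by positivity)).congr_deriv ?_
    field_simp
  · have hprod := (hasDerivAt_id' x).fun_mul ((hasDerivAt_id' x).add_const g)
    refine ((hprod.inv (by positivity)).const_mul (-g)).congr_deriv ?_
    field_simp
    ring
  · have hkey : 2 * (g / x) / (g / x + 2) ≤ log (1 + g / x) :=
      le_log_one_add_of_nonneg (by positivity)
    rw [div_le_iff₀ (by positivity)] at hkey
    calc 2 * (-g * (x * (x + g))⁻¹) ^ 2 = g * (2 * (g / x)) * x / (x * (x + g)) ^ 2 := by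
          field_simp
      _ ≤ g * (log (1 + g / x) * (g / x + 2)) * x / (x * (x + g)) ^ 2 := by gcongr
      _ = log (1 + g / x) * (g * (2 * x + g) / (x * (x + g)) ^ 2) := by
          field_simp
          ring

theorem concave_rate_denominator_general (M : ℕ) (g B d K : ℝ)
    (hg : 0 < g) (hB : 0 < B) (hd : 0 < d) (hK : 0 < K)
    (ν gk : Fin M → ℝ) (hνg : ∀ k, 0 ≤ ν k * gk k) :
    ConcaveOn ℝ {q : (Fin M → ℝ) × ℝ | (∀ k, 0 < q.1 k) ∧ 0 < q.2}
      (fun q => d / (B * K *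
        (Real.log (1 + g / (∑ k, ν k * q.1 k * gk k + q.2)) / Real.log 2))) := by
  set S : Set ((Fin M → ℝ) × ℝ) := {q | (∀ k, 0 < q.1 k) ∧ 0 < q.2}
  set ℓ := (Fintype.linearCombination ℝ fun k => ν k * gk k).coprod LinearMap.id
  have hℓ : ∀ q, ℓ q = ∑ k, ν k * q.1 k * gk k + q.2 := fun q => by
    simp only [ℓ, LinearMap.coprod_apply, Fintype.linearCombination_apply, smul_eq_mul,
      LinearMap.id_apply]
    congr 1
    exact Finset.sum_congr rfl fun k _ => by ring
  have hS : Convex ℝ S := by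
    have : S = univ.pi (fun _ => Ioi 0) ×ˢ Ioi 0 := by ext; simp [S]
    exact this ▸ (convex_pi fun _ _ => convex_Ioi 0).prod (convex_Ioi 0)
  have hSℓ : S ⊆ ℓ ⁻¹' Ioi 0 := fun q hq => by
    have hsum : 0 ≤ ∑ k, ν k * q.1 k * gk k := Finset.sum_nonneg fun k _ => by
      simpa only [mul_right_comm] using mul_nonneg (hνg k) (hq.1 k).le
    simpa only [mem_preimage, mem_Ioi, hℓ] using add_pos_of_nonneg_of_pos hsum hq.2
  have hc : 0 ≤ d * log 2 / (B * K) := by positivity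
  refine (((concaveOn_inv_log_one_add_div hg).smul hc).comp_linearMap ℓ).subset hSℓ hS |>.congr
    fun q _ => ?_
  simp only [Function.comp_apply, smul_eq_mul, hℓ]
  field_simp

theorem concave_rate_denominator (M : ℕ) (g B d K σ2 : ℝ)
    (hg : 0 < g) (hB : 0 < B) (hd : 0 < d) (hK : 0 < K) (hσ : 0 < σ2)
    (ν gk : Fin M → ℝ) (hνg : ∀ k, 0 ≤ ν k * gk k) :
    ConcaveOn ℝ {q : (Fin M → ℝ) × ℝ | (∀ k, 0 < q.1 k) ∧ 0 < q.2}
      (fun q => d / (B * K *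
        (Real.log (1 + g / (∑ k, ν k * q.1 k * gk k + q.2)) / Real.log 2))) :=
  concave_rate_denominator_general M g B d K hg hB hd hK ν gk hνg
end

section
/- For each base station i, the function P̃_{ν,i}(p) = (p_i/ν_i) · Σ_{j∈N_i} d_j / (K · B · log₂(1 + p_i g_{i,j} / (Σ_{k≠i} ν_k p_k g_{k,j} + σ²))) is concave on (ℝ>0)^M. -/
open Real Set

/-!
With the signal `x = p i * g i j` and the interference-plus-noise `y = ∑ k ≠ i, ν k p k g k j + σ²`,
each summand is a positive multiple of `x / log (1 + x / y) = y φ (x / y)`, the perspective of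
`φ t = t / log (1 + t)`. The function `φ` is concave on `t > 0`, because `φ''` has the sign of
`2 t - (2 + t) log (1 + t) ≤ 0`; perspectives of concave functions are jointly concave, `(x, y)`
depends affinely on `p`, and nonnegative combinations of concave functions are concave.
-/

theorem hasDerivAt_log_one_add {t : ℝ} (ht : 1 + t ≠ 0) :
    HasDerivAt (fun t => log (1 + t)) (1 / (1 + t)) t :=
  (((hasDerivAt_id' t).const_add 1).log ht).congr_deriv (by simp)

theorem hasDerivAt_div_log_one_add {t : ℝ} (ht : 0 < t) :
    HasDerivAt (fun t => t / log (1 + t))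
      ((log (1 + t) - t / (1 + t)) / log (1 + t) ^ 2) t :=
  ((hasDerivAt_id' t).div (hasDerivAt_log_one_add (by positivity))
    (log_pos (by linarith)).ne').congr_deriv (by ring)

theorem hasDerivAt_deriv_div_log_one_add {t : ℝ} (ht : 0 < t) :
    HasDerivAt (fun t => (log (1 + t) - t / (1 + t)) / log (1 + t) ^ 2)
      ((2 * t - (2 + t) * log (1 + t)) / ((1 + t) ^ 2 * log (1 + t) ^ 3)) t := by
  have h1t : 1 + t ≠ 0 := by positivity
  have hL : log (1 + t) ≠ 0 := (log_pos (by linarith)).ne'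
  have hlog := hasDerivAt_log_one_add h1t
  have hfrac : HasDerivAt (fun t => t / (1 + t)) (1 / (1 + t) ^ 2) t :=
    ((hasDerivAt_id' t).div ((hasDerivAt_id' t).const_add 1) h1t).congr_deriv (by ring)
  refine ((hlog.fun_sub hfrac).fun_div (hlog.fun_pow 2) (pow_ne_zero 2 hL)).congr_deriv ?_
  field_simp
  ring

theorem concaveOn_div_log_one_add : ConcaveOn ℝ (Ioi 0) (fun t : ℝ => t / log (1 + t)) := by
  refine concaveOn_of_hasDerivWithinAt2_nonpos (convex_Ioi 0)
    (fun t ht => (hasDerivAt_div_log_one_add ht).continuousAt.continuousWithinAt)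
    (fun t ht => (hasDerivAt_div_log_one_add (interior_subset ht)).hasDerivWithinAt)
    (fun t ht => (hasDerivAt_deriv_div_log_one_add (interior_subset ht)).hasDerivWithinAt) ?_
  intro t ht
  rw [interior_Ioi, mem_Ioi] at ht
  have hL : 0 < log (1 + t) := log_pos (by linarith)
  have hkey := le_log_one_add_of_nonneg ht.le
  rw [div_le_iff₀ (by linarith)] at hkey
  exact div_nonpos_of_nonpos_of_nonneg (by linarith) (by positivity)
theorem ConcaveOn.perspective {E : Type*} [AddCommGroup E] [Module ℝ E] {s : Set E} {f : E → ℝ}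
    (hf : ConcaveOn ℝ s f) :
    ConcaveOn ℝ {z : E × ℝ | 0 < z.2 ∧ z.2⁻¹ • z.1 ∈ s} (fun z => z.2 * f (z.2⁻¹ • z.1)) := by
  suffices ∀ ⦃x₁ : E⦄ ⦃y₁ : ℝ⦄, 0 < y₁ → y₁⁻¹ • x₁ ∈ s → ∀ ⦃x₂ : E⦄ ⦃y₂ : ℝ⦄, 0 < y₂ →
      y₂⁻¹ • x₂ ∈ s → ∀ ⦃a b : ℝ⦄, 0 ≤ a → 0 ≤ b → a + b = 1 →
      0 < a * y₁ + b * y₂ ∧ (a * y₁ + b * y₂)⁻¹ • (a • x₁ + b • x₂) ∈ s ∧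
      a * (y₁ * f (y₁⁻¹ • x₁)) + b * (y₂ * f (y₂⁻¹ • x₂)) ≤
        (a * y₁ + b * y₂) * f ((a * y₁ + b * y₂)⁻¹ • (a • x₁ + b • x₂)) from
    ⟨fun _ hz _ hw _ _ ha hb hab =>
      let h := this hz.1 hz.2 hw.1 hw.2 ha hb hab; ⟨h.1, h.2.1⟩,
     fun _ hz _ hw _ _ ha hb hab => (this hz.1 hz.2 hw.1 hw.2 ha hb hab).2.2⟩
  intro x₁ y₁ hy₁ hx₁ x₂ y₂ hy₂ hx₂ a b ha hb hab
  set y := a * y₁ + b * y₂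
  have hy : 0 < y := convex_Ioi (0 : ℝ) hy₁ hy₂ ha hb hab
  -- the new point is a convex combination of the old ones, with weights `a y₁ / y` and `b y₂ / y`
  have hweights : a * y₁ / y + b * y₂ / y = 1 := by rw [← add_div, div_self hy.ne']
  have hcomb : y⁻¹ • (a • x₁ + b • x₂) =
      (a * y₁ / y) • (y₁⁻¹ • x₁) + (b * y₂ / y) • (y₂⁻¹ • x₂) := by
    simp only [smul_smul, smul_add]
    congr 2 <;> field_simp
  have hwa : 0 ≤ a * y₁ / y := by positivity
  have hwb : 0 ≤ b * y₂ / y := by positivity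
  refine ⟨hy, hcomb ▸ hf.1 hx₁ hx₂ hwa hwb hweights, ?_⟩
  rw [hcomb]
  calc a * (y₁ * f (y₁⁻¹ • x₁)) + b * (y₂ * f (y₂⁻¹ • x₂))
      = y * ((a * y₁ / y) • f (y₁⁻¹ • x₁) + (b * y₂ / y) • f (y₂⁻¹ • x₂)) := by
        simp only [smul_eq_mul]; field_simp
    _ ≤ y * f ((a * y₁ / y) • (y₁⁻¹ • x₁) + (b * y₂ / y) • (y₂⁻¹ • x₂)) :=
        mul_le_mul_of_nonneg_left (hf.2 hx₁ hx₂ hwa hwb hweights) hy.le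

section SignalInterference

variable {ι κ : Type*} [Fintype ι] [DecidableEq ι]

noncomputable def signalInterferenceMap (i : ι) (j : κ) (g : ι → κ → ℝ) (ν : ι → ℝ) (σ2 : ℝ) :
    (ι → ℝ) →ᵃ[ℝ] ℝ × ℝ :=
  ((g i j • LinearMap.proj i).prod
      (∑ k ∈ Finset.univ.erase i, (ν k * g k j) • LinearMap.proj k)).toAffineMap +
    AffineMap.const ℝ _ (0, σ2)

theorem signalInterferenceMap_apply (i : ι) (j : κ) (g : ι → κ → ℝ) (ν : ι → ℝ) (σ2 : ℝ)
    (p : ι → ℝ) :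
    signalInterferenceMap i j g ν σ2 p =
      (p i * g i j, ∑ k ∈ Finset.univ.erase i, ν k * p k * g k j + σ2) := by
  simp [signalInterferenceMap, LinearMap.sum_apply, mul_comm, mul_left_comm]

end SignalInterference

theorem concaveOn_sum {𝕜 E β κ : Type*} [Semiring 𝕜] [PartialOrder 𝕜] [IsOrderedRing 𝕜]
    [AddCommMonoid E] [AddCommMonoid β] [PartialOrder β] [IsOrderedAddMonoid β] [SMul 𝕜 E]
    [Module 𝕜 β] {s : Set E} {t : Finset κ} {f : κ → E → β} (hs : Convex 𝕜 s)
    (hf : ∀ j ∈ t, ConcaveOn 𝕜 s (f j)) :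
    ConcaveOn 𝕜 s (fun x => ∑ j ∈ t, f j x) := by
  classical
  induction t using Finset.induction_on with
  | empty => simpa using concaveOn_const 0 hs
  | insert j t hj ih =>
    simp only [Finset.sum_insert hj]
    exact (hf j (Finset.mem_insert_self j t)).add
      (ih fun k hk => hf k (Finset.mem_insert_of_mem hk))

theorem concaveOn_div_log_one_add_div :
    ConcaveOn ℝ (Ioi 0 ×ˢ Ioi 0) (fun z : ℝ × ℝ => z.1 / log (1 + z.1 / z.2)) := by
  refine (concaveOn_div_log_one_add.perspective.subset (fun z hz => ⟨hz.2, ?_⟩) ?_).congr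
    fun z hz => ?_
  · exact smul_pos (inv_pos.2 hz.2) (mem_Ioi.1 hz.1)
  · exact (convex_Ioi 0).prod (convex_Ioi 0)
  · have : z.2 ≠ 0 := (mem_Ioi.1 hz.2).ne'
    simp only [smul_eq_mul, inv_mul_eq_div]
    field_simp

theorem power_function_concave (M N : ℕ) (i : Fin M)
    (Ni : Finset (Fin N)) (d : Fin N → ℝ) (g : Fin M → Fin N → ℝ)
    (ν : Fin M → ℝ) (B K σ2 : ℝ)
    (hν : ∀ k, 0 < ν k) (hd : ∀ j, 0 < d j) (hg : ∀ k j, 0 < g k j)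
    (hB : 0 < B) (hK : 0 < K) (hσ : 0 < σ2) :
    ConcaveOn ℝ {p : Fin M → ℝ | ∀ k, 0 < p k}
      (fun p => (p i / ν i) * ∑ j ∈ Ni, d j / (K * B *
        (Real.log (1 + p i * g i j /
          (∑ k ∈ Finset.univ.erase i, ν k * p k * g k j + σ2)) / Real.log 2))) := by
  have hS : Convex ℝ {p : Fin M → ℝ | ∀ k, 0 < p k} :=
    fun p hp q hq a b ha hb hab k => convex_Ioi (0 : ℝ) (hp k) (hq k) ha hb hab
  have hterm : ∀ j, ConcaveOn ℝ {p : Fin M → ℝ | ∀ k, 0 < p k}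
      (fun p => (p i * g i j) / log (1 + p i * g i j /
        (∑ k ∈ Finset.univ.erase i, ν k * p k * g k j + σ2))) := fun j => by
    refine ((concaveOn_div_log_one_add_div.comp_affineMap
      (signalInterferenceMap i j g ν σ2)).subset (fun p hp => ?_) hS).congr fun p _ => ?_
    · rw [mem_preimage, signalInterferenceMap_apply]
      have hinterference : 0 ≤ ∑ k ∈ Finset.univ.erase i, ν k * p k * g k j :=
        Finset.sum_nonneg fun k _ => (mul_pos (mul_pos (hν k) (hp k)) (hg k j)).le
      exact ⟨mul_pos (hp i) (hg i j), add_pos_of_nonneg_of_pos hinterference hσ⟩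
    · simp only [Function.comp_apply, signalInterferenceMap_apply]
  have hweight : ∀ j, 0 ≤ d j * log 2 / (ν i * K * B * g i j) := fun j => by
    have := hd j; have := hν i; have := hg i j; positivity
  refine (concaveOn_sum (t := Ni) hS fun j _ => (hterm j).smul (hweight j)).congr fun p _ => ?_
  simp only [smul_eq_mul, Finset.mul_sum]
  refine Finset.sum_congr rfl fun j _ => ?_
  have := (hν i).ne'; have := hK.ne'; have := hB.ne'; have := (hg i j).ne'
  have := (log_pos one_lt_two).ne'
  field_simp
end

section
/- Suppose p' ∈ (ℝ>0)^M is a fixed point of the mapping P_{ν'} (i.e., p' induces load ν'), and let ν'' ≥ ν' componentwise with ν'' ≠ ν'. Define α_i = ν''_i/ν'_i ≥ 1 and p_i = p'_i/α_i. Then P_{ν'',i}(p) ≤ p_i for every i, with strict inequality exactly for those i with α_i > 1. -/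
/-- Component `i` of the power interference mapping `P_ν` (on strictly
positive power vectors, where the closed-form expression applies). -/
noncomputable def Pfun (M N : ℕ) (Ni : Fin M → Finset (Fin N))
    (d : Fin N → ℝ) (g : Fin M → Fin N → ℝ) (B K σ2 : ℝ)
    (ν : Fin M → ℝ) (i : Fin M) (p : Fin M → ℝ) : ℝ :=
  (p i / ν i) * ∑ j ∈ Ni i, d j / (K * B *
    (Real.log (1 + p i * g i j /
      (∑ k ∈ Finset.univ.erase i, ν k * p k * g k j + σ2)) / Real.log 2))

/-!
Scaling every power by `ν'_k / ν''_k` leaves each product `ν_k p_k`, hence every interference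
term, unchanged, so user `i` sees all its SINRs multiplied by `t = ν'_i / ν''_i ≤ 1`. By
concavity of `log`, `t · log (1 + s) ≤ log (1 + t s)` (strictly for `t < 1`), so each rate drops
by at most the factor `t` and the load of user `i` grows by at most `1 / t`: it stays below
`ν'_i / t = ν''_i`, which is exactly `P_{ν''}(p)_i ≤ p_i`.
-/

open Real Finset

noncomputable section

def shannonRate (K B x : ℝ) : ℝ := K * B * (log (1 + x) / log 2)

def sinr {M N : ℕ} (g : Fin M → Fin N → ℝ) (σ2 : ℝ) (ν p : Fin M → ℝ) (i : Fin M)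
    (j : Fin N) : ℝ :=
  p i * g i j / (∑ k ∈ univ.erase i, ν k * p k * g k j + σ2)

def load {M N : ℕ} (Ni : Fin M → Finset (Fin N)) (d : Fin N → ℝ) (g : Fin M → Fin N → ℝ)
    (B K σ2 : ℝ) (ν p : Fin M → ℝ) (i : Fin M) : ℝ :=
  ∑ j ∈ Ni i, d j / shannonRate K B (sinr g σ2 ν p i j)

end

lemma mul_log_one_add_le_log_one_add_mul {t s : ℝ} (ht0 : 0 ≤ t) (ht1 : t ≤ 1) (hs : 0 ≤ s) :
    t * log (1 + s) ≤ log (1 + t * s) := by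
  have h := strictConcaveOn_log_Ioi.concaveOn.2 (Set.mem_Ioi.2 one_pos)
    (Set.mem_Ioi.2 (by linarith : (0 : ℝ) < 1 + s)) (sub_nonneg.2 ht1) ht0 (by ring)
  simp only [smul_eq_mul, log_one, mul_zero, zero_add] at h
  rwa [show (1 - t) * 1 + t * (1 + s) = 1 + t * s by ring] at h

lemma mul_log_one_add_lt_log_one_add_mul {t s : ℝ} (ht0 : 0 < t) (ht1 : t < 1) (hs : 0 < s) :
    t * log (1 + s) < log (1 + t * s) := by
  have h := strictConcaveOn_log_Ioi.2 (Set.mem_Ioi.2 one_pos)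
    (Set.mem_Ioi.2 (by linarith : (0 : ℝ) < 1 + s)) (by linarith : (1 : ℝ) ≠ 1 + s)
    (sub_pos.2 ht1) ht0 (by ring)
  simp only [smul_eq_mul, log_one, mul_zero, zero_add] at h
  rwa [show (1 - t) * 1 + t * (1 + s) = 1 + t * s by ring] at h

section shannonRate

variable {K B : ℝ}

lemma shannonRate_pos (hK : 0 < K) (hB : 0 < B) {s : ℝ} (hs : 0 < s) :
    0 < shannonRate K B s := by
  have := log_pos (by linarith : (1 : ℝ) < 1 + s)
  unfold shannonRate
  positivity

lemma mul_shannonRate_le (hK : 0 ≤ K) (hB : 0 ≤ B) {t s : ℝ} (ht0 : 0 ≤ t) (ht1 : t ≤ 1)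
    (hs : 0 ≤ s) : t * shannonRate K B s ≤ shannonRate K B (t * s) := by
  unfold shannonRate
  have := mul_log_one_add_le_log_one_add_mul ht0 ht1 hs
  have : 0 ≤ K * B / log 2 := by positivity
  calc t * (K * B * (log (1 + s) / log 2)) = K * B / log 2 * (t * log (1 + s)) := by ring
    _ ≤ K * B / log 2 * log (1 + t * s) := by gcongr
    _ = K * B * (log (1 + t * s) / log 2) := by ring

lemma mul_shannonRate_lt (hK : 0 < K) (hB : 0 < B) {t s : ℝ} (ht0 : 0 < t) (ht1 : t < 1)
    (hs : 0 < s) : t * shannonRate K B s < shannonRate K B (t * s) := by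
  unfold shannonRate
  have := mul_log_one_add_lt_log_one_add_mul ht0 ht1 hs
  have : 0 < K * B / log 2 := by have := log_pos one_lt_two; positivity
  calc t * (K * B * (log (1 + s) / log 2)) = K * B / log 2 * (t * log (1 + s)) := by ring
    _ < K * B / log 2 * log (1 + t * s) := by gcongr
    _ = K * B * (log (1 + t * s) / log 2) := by ring

variable {ι : Type*} {S : Finset ι} {d s : ι → ℝ} {t : ℝ}

lemma sum_div_shannonRate_mul_le (hK : 0 < K) (hB : 0 < B) (hd : ∀ j, 0 ≤ d j)
    (hs : ∀ j, 0 < s j) (ht0 : 0 < t) (ht1 : t ≤ 1) :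
    ∑ j ∈ S, d j / shannonRate K B (t * s j) ≤ t⁻¹ * ∑ j ∈ S, d j / shannonRate K B (s j) := by
  rw [mul_sum]
  refine sum_le_sum fun j _ => ?_
  have hR := shannonRate_pos hK hB (hs j)
  calc d j / shannonRate K B (t * s j) ≤ d j / (t * shannonRate K B (s j)) :=
        div_le_div_of_nonneg_left (hd j) (by positivity)
          (mul_shannonRate_le hK.le hB.le ht0.le ht1 (hs j).le)
    _ = t⁻¹ * (d j / shannonRate K B (s j)) := by field_simp

lemma sum_div_shannonRate_mul_lt_iff (hK : 0 < K) (hB : 0 < B) (hS : S.Nonempty)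
    (hd : ∀ j, 0 < d j) (hs : ∀ j, 0 < s j) (ht0 : 0 < t) (ht1 : t ≤ 1) :
    ∑ j ∈ S, d j / shannonRate K B (t * s j) < t⁻¹ * ∑ j ∈ S, d j / shannonRate K B (s j) ↔
      t < 1 := by
  refine ⟨fun h => ht1.lt_of_ne ?_, fun ht1 => ?_⟩
  · rintro rfl
    simp at h
  rw [mul_sum]
  refine sum_lt_sum_of_nonempty hS fun j _ => ?_
  have hR := shannonRate_pos hK hB (hs j)
  calc d j / shannonRate K B (t * s j) < d j / (t * shannonRate K B (s j)) :=
        div_lt_div_of_pos_left (hd j) (by positivity) (mul_shannonRate_lt hK hB ht0 ht1 (hs j))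
    _ = t⁻¹ * (d j / shannonRate K B (s j)) := by field_simp

end shannonRate

section Pfun

variable {M N : ℕ} {Ni : Fin M → Finset (Fin N)} {d : Fin N → ℝ} {g : Fin M → Fin N → ℝ}
  {B K σ2 : ℝ} {ν p : Fin M → ℝ} {i : Fin M}

lemma Pfun_eq_mul_load : Pfun M N Ni d g B K σ2 ν i p = p i / ν i * load Ni d g B K σ2 ν p i :=
  rfl

lemma Pfun_eq_self_iff (hp : 0 < p i) (hν : 0 < ν i) :
    Pfun M N Ni d g B K σ2 ν i p = p i ↔ load Ni d g B K σ2 ν p i = ν i := by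
  rw [Pfun_eq_mul_load, div_mul_eq_mul_div, div_eq_iff hν.ne', mul_left_cancel_iff_of_pos hp]

lemma Pfun_le_self_iff (hp : 0 < p i) (hν : 0 < ν i) :
    Pfun M N Ni d g B K σ2 ν i p ≤ p i ↔ load Ni d g B K σ2 ν p i ≤ ν i := by
  rw [Pfun_eq_mul_load, div_mul_eq_mul_div, div_le_iff₀ hν, mul_le_mul_iff_of_pos_left hp]

lemma Pfun_lt_self_iff (hp : 0 < p i) (hν : 0 < ν i) :
    Pfun M N Ni d g B K σ2 ν i p < p i ↔ load Ni d g B K σ2 ν p i < ν i := by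
  rw [Pfun_eq_mul_load, div_mul_eq_mul_div, div_lt_iff₀ hν, mul_lt_mul_iff_of_pos_left hp]

end Pfun

lemma sinr_pos {M N : ℕ} {g : Fin M → Fin N → ℝ} {σ2 : ℝ} {ν p : Fin M → ℝ} {i : Fin M}
    (hg : ∀ k j, 0 < g k j) (hσ : 0 < σ2) (hν : ∀ k, 0 ≤ ν k) (hp : ∀ k, 0 < p k) (j : Fin N) :
    0 < sinr g σ2 ν p i j := by
  unfold sinr
  have := hp i; have := hg i j
  have : 0 ≤ ∑ k ∈ univ.erase i, ν k * p k * g k j :=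
    sum_nonneg fun k _ => mul_nonneg (mul_nonneg (hν k) (hp k).le) (hg k j).le
  positivity

lemma sinr_eq_mul_of_mul_eq {M N : ℕ} {g : Fin M → Fin N → ℝ} {σ2 : ℝ} {ν ν' p p' : Fin M → ℝ}
    {i : Fin M} {t : ℝ} (hprod : ∀ k, ν k * p k = ν' k * p' k) (hpi : p i = t * p' i)
    (j : Fin N) : sinr g σ2 ν p i j = t * sinr g σ2 ν' p' i j := by
  simp only [sinr, hprod, hpi, mul_assoc, mul_div_assoc]

theorem power_decrease_componentwise_general (M N : ℕ)
    (Ni : Fin M → Finset (Fin N)) (hNi : ∀ i, (Ni i).Nonempty)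
    (d : Fin N → ℝ) (g : Fin M → Fin N → ℝ) (B K σ2 : ℝ)
    (hd : ∀ j, 0 < d j) (hg : ∀ k j, 0 < g k j)
    (hB : 0 < B) (hK : 0 < K) (hσ : 0 < σ2)
    (ν' ν'' p' : Fin M → ℝ)
    (hν' : ∀ i, 0 < ν' i) (hp' : ∀ i, 0 < p' i)
    (hfix : ∀ i, Pfun M N Ni d g B K σ2 ν' i p' = p' i)
    (hle : ∀ i, ν' i ≤ ν'' i)
    (p : Fin M → ℝ) (hp : ∀ i, p i = p' i * ν' i / ν'' i) :
    ∀ i, Pfun M N Ni d g B K σ2 ν'' i p ≤ p i ∧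
      (Pfun M N Ni d g B K σ2 ν'' i p < p i ↔ ν' i < ν'' i) := by
  intro i
  have hν'' : ∀ k, 0 < ν'' k := fun k => (hν' k).trans_le (hle k)
  set t := ν' i / ν'' i with ht
  have ht0 : 0 < t := div_pos (hν' i) (hν'' i)
  have ht1 : t ≤ 1 := div_le_one_of_le₀ (hle i) (hν'' i).le
  have hpi : p i = t * p' i := by rw [hp, ht]; ring
  have hprod : ∀ k, ν'' k * p k = ν' k * p' k := fun k => by
    rw [hp k]; field_simp [(hν'' k).ne']
  have hs := sinr_pos (i := i) hg hσ (fun k => (hν' k).le) hp'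
  have hload' := (Pfun_eq_self_iff (hp' i) (hν' i)).1 (hfix i)
  have hload'' : load Ni d g B K σ2 ν'' p i =
      ∑ j ∈ Ni i, d j / shannonRate K B (t * sinr g σ2 ν' p' i j) := by
    simp only [load, sinr_eq_mul_of_mul_eq hprod hpi]
  have hν''i : ν'' i = t⁻¹ * load Ni d g B K σ2 ν' p' i := by
    rw [hload', ht]; field_simp [(hν' i).ne']
  have hpi0 : 0 < p i := hpi ▸ mul_pos ht0 (hp' i)
  rw [Pfun_le_self_iff hpi0 (hν'' i), Pfun_lt_self_iff hpi0 (hν'' i),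
    ← div_lt_one (a := ν' i) (hν'' i), ← ht, hload'', hν''i]
  exact ⟨sum_div_shannonRate_mul_le hK hB (fun j => (hd j).le) hs ht0 ht1,
    sum_div_shannonRate_mul_lt_iff hK hB (hNi i) hd hs ht0 ht1⟩

theorem power_decrease_componentwise (M N : ℕ)
    (Ni : Fin M → Finset (Fin N)) (hNi : ∀ i, (Ni i).Nonempty)
    (d : Fin N → ℝ) (g : Fin M → Fin N → ℝ) (B K σ2 : ℝ)
    (hd : ∀ j, 0 < d j) (hg : ∀ k j, 0 < g k j)
    (hB : 0 < B) (hK : 0 < K) (hσ : 0 < σ2)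
    (ν' ν'' p' : Fin M → ℝ)
    (hν' : ∀ i, 0 < ν' i) (hp' : ∀ i, 0 < p' i)
    (hfix : ∀ i, Pfun M N Ni d g B K σ2 ν' i p' = p' i)
    (hle : ∀ i, ν' i ≤ ν'' i) (hne : ν'' ≠ ν')
    (p : Fin M → ℝ) (hp : ∀ i, p i = p' i * ν' i / ν'' i) :
    ∀ i, Pfun M N Ni d g B K σ2 ν'' i p ≤ p i ∧
      (Pfun M N Ni d g B K σ2 ν'' i p < p i ↔ ν' i < ν'' i) :=
  power_decrease_componentwise_general M N Ni hNi d g B K σ2 hd hg hB hK hσ ν' ν'' p' hν' hp' hfix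
    hle p hp
end

section
/- Under the assumptions of the previous statement (p' a fixed point of P_{ν'}, ν'' ≥ ν', ν'' ≠ ν'), the mapping P_{ν''} has a unique fixed point p'' ∈ (ℝ>0)^M, and p'' satisfies 0 < p'' < p ≤ p' componentwise, where p_i = p'_i · ν'_i/ν''_i. -/
/-!
Because `ν''_k p_k = ν'_k p'_k`, the vector `p` meets under `ν''` exactly the interference that
`p'` meets under `ν'`; as `x ↦ x / log (1 + a x)` is strictly increasing, `p ≤ p'` gives
`P_{ν''}(p) ≤ p`, strictly in a coordinate where `ν' < ν''`. The mapping `P_{ν''}` is monotone,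
strictly scalable (`P(α q) < α P(q)` for `α > 1`) and bounded below by a positive vector, so
Knaster–Tarski on the box `[lower bound, p]` gives a fixed point `p'' ≤ p`, and scalability makes
positive fixed points unique. Since all gains are positive, every user interferes with every other:
if `p''_i = p_i` for some `i`, strict monotonicity forces `p'' = p`, contradicting `P_{ν''}(p) ≠ p`.
-/

open Finset

theorem strictMonoOn_div_log_one_add :
    StrictMonoOn (fun u : ℝ => u / Real.log (1 + u)) (Set.Ioi 0) := by
  intro u (hu : 0 < u) v (hv : 0 < v) huv
  -- `log (1 + u) / u` is the slope of a secant of the concave `log` through `1`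
  have hsecant := strictConcaveOn_log_Ioi.secant_strict_mono (a := 1) (x := 1 + u) (y := 1 + v)
    (Set.mem_Ioi.2 one_pos) (Set.mem_Ioi.2 (by linarith)) (Set.mem_Ioi.2 (by linarith))
    (by linarith) (by linarith) (by linarith)
  simp only [Real.log_one, sub_zero, add_sub_cancel_left] at hsecant
  have hlogv : 0 < Real.log (1 + v) := Real.log_pos (by linarith)
  simpa only [inv_div] using inv_strictAnti₀ (div_pos hlogv hv) hsecant

theorem one_le_div_log_one_add {u : ℝ} (hu : 0 < u) : 1 ≤ u / Real.log (1 + u) := by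
  have hlog : 0 < Real.log (1 + u) := Real.log_pos (by linarith)
  rw [one_le_div hlog]
  linarith [Real.log_le_sub_one_of_pos (show 0 < 1 + u by linarith)]

/-- Power over spectral efficiency `log (1 + SINR)` of a link with gain `g`, noise `σ2`, transmit
power `x` and received interference `I`. -/
noncomputable def inverseRate (g σ2 x I : ℝ) : ℝ := x / Real.log (1 + x * g / (I + σ2))

section inverseRate

variable {g σ2 x y I J : ℝ}

theorem inverseRate_eq_mul (hg : 0 < g) (hIσ : 0 < I + σ2) :
    inverseRate g σ2 x I = x * g / (I + σ2) / Real.log (1 + x * g / (I + σ2)) * ((I + σ2) / g) := by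
  unfold inverseRate
  field_simp

theorem log_one_add_sinr_pos (hg : 0 < g) (hσ : 0 < σ2) (hx : 0 < x) (hI : 0 ≤ I) :
    0 < Real.log (1 + x * g / (I + σ2)) := by
  have : 0 < x * g / (I + σ2) := by positivity
  exact Real.log_pos (by linarith)

theorem inverseRate_lt_inverseRate_left (hg : 0 < g) (hσ : 0 < σ2) (hI : 0 ≤ I) (hx : 0 < x)
    (hxy : x < y) : inverseRate g σ2 x I < inverseRate g σ2 y I := by
  have hIσ : 0 < I + σ2 := by linarith
  rw [inverseRate_eq_mul hg hIσ, inverseRate_eq_mul hg hIσ]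
  gcongr ?_ * _
  have hy : 0 < y := hx.trans hxy
  exact strictMonoOn_div_log_one_add (Set.mem_Ioi.2 (by positivity)) (Set.mem_Ioi.2 (by positivity))
    (by gcongr)

theorem inverseRate_lt_inverseRate_right (hg : 0 < g) (hσ : 0 < σ2) (hx : 0 < x) (hI : 0 ≤ I)
    (hIJ : I < J) : inverseRate g σ2 x I < inverseRate g σ2 x J := by
  have hJ : 0 ≤ J := hI.trans hIJ.le
  have := log_one_add_sinr_pos hg hσ hx hJ
  unfold inverseRate
  gcongr

theorem inverseRate_le_inverseRate (hg : 0 < g) (hσ : 0 < σ2) (hx : 0 < x) (hI : 0 ≤ I)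
    (hxy : x ≤ y) (hIJ : I ≤ J) : inverseRate g σ2 x I ≤ inverseRate g σ2 y J := by
  calc inverseRate g σ2 x I ≤ inverseRate g σ2 x J := by
        rcases hIJ.eq_or_lt with rfl | hIJ
        · rfl
        · exact (inverseRate_lt_inverseRate_right hg hσ hx hI hIJ).le
    _ ≤ inverseRate g σ2 y J := by
        rcases hxy.eq_or_lt with rfl | hxy
        · rfl
        · exact (inverseRate_lt_inverseRate_left hg hσ (hI.trans hIJ) hx hxy).le

theorem inverseRate_mul_lt (hg : 0 < g) (hσ : 0 < σ2) (hx : 0 < x) (hI : 0 ≤ I) {α : ℝ}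
    (hα : 1 < α) : inverseRate g σ2 (α * x) (α * I) < α * inverseRate g σ2 x I := by
  have hsinr : x * g / (I + σ2) < α * x * g / (α * I + σ2) := by
    rw [div_lt_div_iff₀ (by positivity) (by positivity)]
    nlinarith [mul_pos (mul_pos hx hg) hσ, mul_pos (mul_pos (mul_pos hx hg) hσ) (sub_pos.2 hα)]
  have := log_one_add_sinr_pos hg hσ hx hI
  rw [inverseRate, inverseRate, mul_div_assoc]
  gcongr

theorem div_le_inverseRate (hg : 0 < g) (hσ : 0 < σ2) (hx : 0 < x) (hI : 0 ≤ I) :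
    σ2 / g ≤ inverseRate g σ2 x I := by
  have hIσ : 0 < I + σ2 := by linarith
  rw [inverseRate_eq_mul hg hIσ]
  calc σ2 / g ≤ (I + σ2) / g := by gcongr; linarith
    _ ≤ _ := le_mul_of_one_le_left (by positivity) (one_le_div_log_one_add (by positivity))

end inverseRate

theorem exists_eq_mem_Icc_of_mapsTo {α : Type*} [ConditionallyCompleteLattice α] {f : α → α}
    {a b : α} (hab : a ≤ b) (hf : MonotoneOn f (Set.Icc a b))
    (hmaps : Set.MapsTo f (Set.Icc a b) (Set.Icc a b)) : ∃ x ∈ Set.Icc a b, f x = x := by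
  have : Fact (a ≤ b) := ⟨hab⟩
  let F : Set.Icc a b →o Set.Icc a b :=
    ⟨hmaps.restrict, fun x y hxy => hf x.2 y.2 hxy⟩
  exact ⟨_, (OrderHom.lfp F).2, congrArg Subtype.val (OrderHom.map_lfp F)⟩

section StandardInterference

variable {ι : Type*} {P : (ι → ℝ) → ι → ℝ}

theorem le_of_map_eq_of_scalable [Fintype ι]
    (hmono : ∀ q r, (∀ k, 0 < q k) → q ≤ r → P q ≤ P r)
    (hscal : ∀ q, (∀ k, 0 < q k) → ∀ α : ℝ, 1 < α → ∀ i, P (α • q) i < α * P q i)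
    {q r : ι → ℝ} (hq : ∀ k, 0 < q k) (hr : ∀ k, 0 < r k) (hPq : P q = q) (hPr : P r = r) :
    q ≤ r := by
  by_contra hqr
  obtain ⟨k₀, hk₀⟩ : ∃ k, r k < q k := by simpa [Pi.le_def] using hqr
  obtain ⟨i, -, hi⟩ := Finset.exists_max_image Finset.univ (fun k => q k / r k) ⟨k₀, mem_univ _⟩
  set α := q i / r i
  have hα : 1 < α := ((one_lt_div (hr k₀)).2 hk₀).trans_le (hi k₀ (mem_univ _))
  have hqα : q ≤ α • r := fun k => by
    simpa [div_le_iff₀ (hr k)] using hi k (mem_univ _)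
  have := calc q i = P q i := (congrFun hPq i).symm
    _ ≤ P (α • r) i := hmono q _ hq hqα i
    _ < α * P r i := hscal r hr α hα i
    _ = q i := by rw [hPr]; exact div_mul_cancel₀ _ (hr i).ne'
  exact lt_irrefl _ this

theorem eq_of_map_eq_of_scalable [Fintype ι]
    (hmono : ∀ q r, (∀ k, 0 < q k) → q ≤ r → P q ≤ P r)
    (hscal : ∀ q, (∀ k, 0 < q k) → ∀ α : ℝ, 1 < α → ∀ i, P (α • q) i < α * P q i)
    {q r : ι → ℝ} (hq : ∀ k, 0 < q k) (hr : ∀ k, 0 < r k) (hPq : P q = q) (hPr : P r = r) :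
    q = r :=
  le_antisymm (le_of_map_eq_of_scalable hmono hscal hq hr hPq hPr)
    (le_of_map_eq_of_scalable hmono hscal hr hq hPr hPq)

theorem lt_of_map_eq_of_map_le
    (hstrict : ∀ q r, (∀ k, 0 < q k) → q ≤ r → q ≠ r → ∀ i, q i = r i → P q i < P r i)
    {p q : ι → ℝ} {i₀ : ι} (hPp : P p ≤ p) (hPpi₀ : P p i₀ < p i₀)
    (hq : ∀ k, 0 < q k) (hPq : P q = q) (hqp : q ≤ p) (i : ι) : q i < p i := by
  refine (hqp i).lt_of_ne fun hi => ?_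
  by_cases hqp' : q = p
  · subst hqp'
    rw [hPq] at hPpi₀
    exact lt_irrefl _ hPpi₀
  · have := calc q i = P q i := (congrFun hPq i).symm
      _ < P p i := hstrict q p hq hqp hqp' i hi
      _ ≤ p i := hPp i
    exact this.ne hi

end StandardInterference

def interference {M N : ℕ} (g : Fin M → Fin N → ℝ) (ν q : Fin M → ℝ) (i : Fin M) (j : Fin N) :
    ℝ :=
  ∑ k ∈ univ.erase i, ν k * q k * g k j

section Pfun

variable {M N : ℕ} {Ni : Fin M → Finset (Fin N)} {d : Fin N → ℝ} {g : Fin M → Fin N → ℝ}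
  {B K σ2 : ℝ} {ν q r : Fin M → ℝ}

theorem interference_nonneg (hν : ∀ k, 0 ≤ ν k) (hq : ∀ k, 0 ≤ q k) (hg : ∀ k j, 0 ≤ g k j)
    (i : Fin M) (j : Fin N) : 0 ≤ interference g ν q i j :=
  sum_nonneg fun k _ => mul_nonneg (mul_nonneg (hν k) (hq k)) (hg k j)

theorem interference_mono (hν : ∀ k, 0 ≤ ν k) (hg : ∀ k j, 0 ≤ g k j) (hqr : q ≤ r)
    (i : Fin M) (j : Fin N) : interference g ν q i j ≤ interference g ν r i j := by
  unfold interference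
  gcongr with k
  · exact hg k j
  · exact hν k
  · exact hqr k

theorem interference_lt (hν : ∀ k, 0 < ν k) (hg : ∀ k j, 0 < g k j) (hqr : q ≤ r) {i k : Fin M}
    (hki : k ≠ i) (hk : q k < r k) (j : Fin N) : interference g ν q i j < interference g ν r i j :=
  sum_lt_sum
    (fun l _ => mul_le_mul_of_nonneg_right (mul_le_mul_of_nonneg_left (hqr l) (hν l).le)
      (hg l j).le)
    ⟨k, mem_erase.2 ⟨hki, mem_univ k⟩,
      mul_lt_mul_of_pos_right (mul_lt_mul_of_pos_left hk (hν k)) (hg k j)⟩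

theorem interference_smul (α : ℝ) (i : Fin M) (j : Fin N) :
    interference g ν (α • q) i j = α * interference g ν q i j := by
  simp only [interference, mul_sum, Pi.smul_apply, smul_eq_mul]
  exact sum_congr rfl fun k _ => by ring

theorem Pfun_eq (i : Fin M) : Pfun M N Ni d g B K σ2 ν i q =
    (∑ j ∈ Ni i, d j * Real.log 2 / (K * B) *
      inverseRate (g i j) σ2 (q i) (interference g ν q i j)) / ν i := by
  simp only [Pfun, inverseRate, interference, mul_sum, sum_div]
  exact sum_congr rfl fun j _ => by simp only [div_eq_mul_inv, mul_inv, inv_inv]; ring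

theorem Pfun_le_Pfun (hd : ∀ j, 0 < d j) (hg : ∀ k j, 0 < g k j) (hB : 0 < B) (hK : 0 < K)
    (hσ : 0 < σ2) (hν : ∀ k, 0 < ν k) (hq : ∀ k, 0 < q k) (hqr : q ≤ r) (i : Fin M) :
    Pfun M N Ni d g B K σ2 ν i q ≤ Pfun M N Ni d g B K σ2 ν i r := by
  rw [Pfun_eq, Pfun_eq]
  have := hν i
  gcongr with j
  · have := hd j
    positivity
  · exact inverseRate_le_inverseRate (hg i j) hσ (hq i)
      (interference_nonneg (fun k => (hν k).le) (fun k => (hq k).le) (fun k j => (hg k j).le) i j)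
      (hqr i) (interference_mono (fun k => (hν k).le) (fun k j => (hg k j).le) hqr i j)

theorem Pfun_lt_Pfun_of_eq {i : Fin M} (hNi : (Ni i).Nonempty) (hd : ∀ j, 0 < d j)
    (hg : ∀ k j, 0 < g k j) (hB : 0 < B) (hK : 0 < K) (hσ : 0 < σ2) (hν : ∀ k, 0 < ν k)
    (hq : ∀ k, 0 < q k) (hqr : q ≤ r) (hne : q ≠ r) (hi : q i = r i) :
    Pfun M N Ni d g B K σ2 ν i q < Pfun M N Ni d g B K σ2 ν i r := by
  obtain ⟨k, hk⟩ : ∃ k, q k < r k := (Pi.lt_def.1 (hqr.lt_of_ne hne)).2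
  have hki : k ≠ i := by
    rintro rfl
    exact hk.ne hi
  rw [Pfun_eq, Pfun_eq, ← hi]
  have := hν i
  gcongr with j
  · have := hd j
    positivity
  · exact inverseRate_lt_inverseRate_right (hg i j) hσ (hq i)
      (interference_nonneg (fun k => (hν k).le) (fun k => (hq k).le) (fun k j => (hg k j).le) i j)
      (interference_lt hν hg hqr hki hk j)

theorem Pfun_smul_lt {i : Fin M} (hNi : (Ni i).Nonempty) (hd : ∀ j, 0 < d j)
    (hg : ∀ k j, 0 < g k j) (hB : 0 < B) (hK : 0 < K) (hσ : 0 < σ2) (hν : ∀ k, 0 < ν k)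
    (hq : ∀ k, 0 < q k) {α : ℝ} (hα : 1 < α) :
    Pfun M N Ni d g B K σ2 ν i (α • q) < α * Pfun M N Ni d g B K σ2 ν i q := by
  rw [Pfun_eq, Pfun_eq, mul_div_assoc', mul_sum]
  simp_rw [mul_left_comm α]
  have := hν i
  gcongr with j
  · have := hd j
    positivity
  simpa only [Pi.smul_apply, smul_eq_mul, interference_smul] using
    inverseRate_mul_lt (hg i j) hσ (hq i)
      (interference_nonneg (fun k => (hν k).le) (fun k => (hq k).le) (fun k j => (hg k j).le) i j)
      hα

theorem le_Pfun (hd : ∀ j, 0 < d j) (hg : ∀ k j, 0 < g k j) (hB : 0 < B) (hK : 0 < K)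
    (hσ : 0 < σ2) (hν : ∀ k, 0 < ν k) (hq : ∀ k, 0 < q k) (i : Fin M) :
    (∑ j ∈ Ni i, d j * Real.log 2 / (K * B) * (σ2 / g i j)) / ν i
      ≤ Pfun M N Ni d g B K σ2 ν i q := by
  rw [Pfun_eq]
  have := hν i
  gcongr with j
  · have := hd j
    positivity
  · exact div_le_inverseRate (hg i j) hσ (hq i)
      (interference_nonneg (fun k => (hν k).le) (fun k => (hq k).le) (fun k j => (hg k j).le) i j)

theorem exists_fixedPoint_le_of_Pfun_le (hNi : ∀ i, (Ni i).Nonempty) (hd : ∀ j, 0 < d j)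
    (hg : ∀ k j, 0 < g k j) (hB : 0 < B) (hK : 0 < K) (hσ : 0 < σ2) (hν : ∀ k, 0 < ν k)
    {p : Fin M → ℝ} (hp : ∀ k, 0 < p k) (hPp : ∀ i, Pfun M N Ni d g B K σ2 ν i p ≤ p i) :
    ∃ q : Fin M → ℝ, (∀ k, 0 < q k) ∧ q ≤ p ∧ ∀ i, Pfun M N Ni d g B K σ2 ν i q = q i := by
  set lo : Fin M → ℝ := fun i => (∑ j ∈ Ni i, d j * Real.log 2 / (K * B) * (σ2 / g i j)) / ν i
  have hlo : ∀ i, 0 < lo i := fun i =>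
    div_pos (sum_pos (fun j _ => by have := hd j; have := hg i j; positivity) (hNi i)) (hν i)
  have hpos : ∀ q ∈ Set.Icc lo p, ∀ k, 0 < q k := fun q hq k => (hlo k).trans_le (hq.1 k)
  obtain ⟨q, hq, hfix⟩ :=
    exists_eq_mem_Icc_of_mapsTo (f := fun q i => Pfun M N Ni d g B K σ2 ν i q)
    (fun i => (le_Pfun hd hg hB hK hσ hν hp i).trans (hPp i))
    (fun q hq r _ hqr i => Pfun_le_Pfun hd hg hB hK hσ hν (hpos q hq) hqr i)
    (fun q hq => ⟨fun i => le_Pfun hd hg hB hK hσ hν (hpos q hq) i,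
      fun i => (Pfun_le_Pfun hd hg hB hK hσ hν (hpos q hq) hq.2 i).trans (hPp i)⟩)
  exact ⟨q, hpos q hq, hq.2, congrFun hfix⟩

section Rescaling

variable {ν' ν'' p' p : Fin M → ℝ}

theorem Pfun_rescale_le {i : Fin M} (hd : ∀ j, 0 < d j) (hg : ∀ k j, 0 < g k j) (hB : 0 < B)
    (hK : 0 < K) (hσ : 0 < σ2) (hν' : ∀ k, 0 < ν' k) (hν'' : ∀ k, 0 < ν'' k)
    (hp : ∀ k, 0 < p k) (hp' : ∀ k, 0 < p' k) (hfix : Pfun M N Ni d g B K σ2 ν' i p' = p' i)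
    (hprod : ∀ k, ν'' k * p k = ν' k * p' k) (hpp' : p i ≤ p' i) :
    Pfun M N Ni d g B K σ2 ν'' i p ≤ p i := by
  have hI : interference g ν'' p i = interference g ν' p' i :=
    funext fun j => by simp only [interference, hprod]
  rw [← mul_le_mul_iff_right₀ (hν'' i), hprod i, ← hfix, Pfun_eq, Pfun_eq, hI,
    mul_div_cancel₀ _ (hν'' i).ne', mul_div_cancel₀ _ (hν' i).ne']
  gcongr with j
  · have := hd j
    positivity
  · exact inverseRate_le_inverseRate (hg i j) hσ (hp i)
      (interference_nonneg (fun k => (hν' k).le) (fun k => (hp' k).le) (fun k j => (hg k j).le) i j)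
      hpp' le_rfl

theorem Pfun_rescale_lt {i : Fin M} (hNi : (Ni i).Nonempty) (hd : ∀ j, 0 < d j)
    (hg : ∀ k j, 0 < g k j) (hB : 0 < B) (hK : 0 < K) (hσ : 0 < σ2) (hν' : ∀ k, 0 < ν' k)
    (hν'' : ∀ k, 0 < ν'' k)
    (hp : ∀ k, 0 < p k) (hp' : ∀ k, 0 < p' k) (hfix : Pfun M N Ni d g B K σ2 ν' i p' = p' i)
    (hprod : ∀ k, ν'' k * p k = ν' k * p' k) (hpp' : p i < p' i) :
    Pfun M N Ni d g B K σ2 ν'' i p < p i := by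
  have hI : interference g ν'' p i = interference g ν' p' i :=
    funext fun j => by simp only [interference, hprod]
  rw [← mul_lt_mul_iff_right₀ (hν'' i), hprod i, ← hfix, Pfun_eq, Pfun_eq, hI,
    mul_div_cancel₀ _ (hν'' i).ne', mul_div_cancel₀ _ (hν' i).ne']
  gcongr with j
  · have := hd j
    positivity
  · exact inverseRate_lt_inverseRate_left (hg i j) hσ
      (interference_nonneg (fun k => (hν' k).le) (fun k => (hp' k).le) (fun k j => (hg k j).le) i j)
      (hp i) hpp'

end Rescaling

end Pfun

theorem new_fixed_point_exists_and_bounded (M N : ℕ)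
    (Ni : Fin M → Finset (Fin N)) (hNi : ∀ i, (Ni i).Nonempty)
    (d : Fin N → ℝ) (g : Fin M → Fin N → ℝ) (B K σ2 : ℝ)
    (hd : ∀ j, 0 < d j) (hg : ∀ k j, 0 < g k j)
    (hB : 0 < B) (hK : 0 < K) (hσ : 0 < σ2)
    (ν' ν'' p' : Fin M → ℝ)
    (hν' : ∀ i, 0 < ν' i) (hp' : ∀ i, 0 < p' i)
    (hfix : ∀ i, Pfun M N Ni d g B K σ2 ν' i p' = p' i)
    (hle : ∀ i, ν' i ≤ ν'' i) (hne : ν'' ≠ ν')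
    (p : Fin M → ℝ) (hp : ∀ i, p i = p' i * ν' i / ν'' i) :
    ∃ p'' : Fin M → ℝ,
      ((∀ i, 0 < p'' i) ∧ (∀ i, Pfun M N Ni d g B K σ2 ν'' i p'' = p'' i)) ∧
      (∀ q : Fin M → ℝ, (∀ i, 0 < q i) →
        (∀ i, Pfun M N Ni d g B K σ2 ν'' i q = q i) → q = p'') ∧
      (∀ i, 0 < p'' i ∧ p'' i < p i ∧ p i ≤ p' i) := by
  have hν'' : ∀ i, 0 < ν'' i := fun i => (hν' i).trans_le (hle i)
  obtain ⟨i₀, hi₀⟩ : ∃ i, ν' i < ν'' i := (Pi.lt_def.1 (lt_of_le_of_ne hle hne.symm)).2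
  have hpos : ∀ i, 0 < p i := fun i => by
    rw [hp]
    exact div_pos (mul_pos (hp' i) (hν' i)) (hν'' i)
  have hprod : ∀ i, ν'' i * p i = ν' i * p' i := fun i => by
    rw [hp]
    field_simp [(hν'' i).ne']
  have hpp' : ∀ i, p i ≤ p' i := fun i => by
    rw [hp, mul_div_assoc]
    exact mul_le_of_le_one_right (hp' i).le ((div_le_one (hν'' i)).2 (hle i))
  have hpp'₀ : p i₀ < p' i₀ := by
    rw [hp, mul_div_assoc]
    exact mul_lt_of_lt_one_right (hp' i₀) ((div_lt_one (hν'' i₀)).2 hi₀)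
  have hPp : ∀ i, Pfun M N Ni d g B K σ2 ν'' i p ≤ p i := fun i =>
    Pfun_rescale_le hd hg hB hK hσ hν' hν'' hpos hp' (hfix i) hprod (hpp' i)
  have hPp₀ : Pfun M N Ni d g B K σ2 ν'' i₀ p < p i₀ :=
    Pfun_rescale_lt (hNi i₀) hd hg hB hK hσ hν' hν'' hpos hp' (hfix i₀) hprod hpp'₀
  obtain ⟨p'', hpos'', hp''p, hfix''⟩ :=
    exists_fixedPoint_le_of_Pfun_le hNi hd hg hB hK hσ hν'' hpos hPp
  refine ⟨p'', ⟨hpos'', hfix''⟩, fun q hq hfq => ?_, fun i => ⟨hpos'' i, ?_, hpp' i⟩⟩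
  · exact eq_of_map_eq_of_scalable (P := fun q i => Pfun M N Ni d g B K σ2 ν'' i q)
      (fun q r hq hqr i => Pfun_le_Pfun hd hg hB hK hσ hν'' hq hqr i)
      (fun q hq α hα i => Pfun_smul_lt (hNi i) hd hg hB hK hσ hν'' hq hα)
      hq hpos'' (funext hfq) (funext hfix'')
  · exact lt_of_map_eq_of_map_le (P := fun q i => Pfun M N Ni d g B K σ2 ν'' i q)
      (fun q r hq hqr hne i hi => Pfun_lt_Pfun_of_eq (hNi i) hd hg hB hK hσ hν'' hq hqr hne hi)
      hPp hPp₀ hpos'' (funext hfix'') hp''p i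
end

section
/- Let J be a standard interference mapping with fixed point x*, and let u₁ = 0 and v₁ satisfy J(v₁) ≤ v₁. Define u_{n+1} = J(u_n) and v_{n+1} = J(v_n). Then for every n, u_n ≤ x* ≤ v_n componentwise, so ‖u_n − x*‖_∞ ≤ ‖u_n − v_n‖_∞ and ‖v_n − x*‖_∞ ≤ ‖u_n − v_n‖_∞, and the error bound sequence ε_n = ‖u_n − v_n‖_∞ is monotonically decreasing and converges to 0. -/
/-!
Starting from `0` the iterates increase and stay below `x*`; starting from `v₁` with
`J v₁ ≤ v₁` they decrease and stay above `x*`. Everything rests on a comparison principle: a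
nonnegative sub-solution `x ≤ J x` lies below every positive super-solution `J y ≤ y`, for
otherwise the largest ratio `α = x k / y k` exceeds `1`, and `x ≤ α y` gives
`x k ≤ J (α y) k < α J y k ≤ α y k = x k`. Scalability also shows, without any continuity of
`J`, that the limits of the two monotone sequences are a super- and a sub-solution
respectively, so the comparison principle pins both limits to `x*`.
-/

open Filter Function Set Topology

section Iterate

variable {α : Type*} [Preorder α] {f : α → α} {s : Set α}

theorem MonotoneOn.iterate (hf : MonotoneOn f s) (hs : MapsTo f s s) (n : ℕ) :
    MonotoneOn f^[n] s := by
  induction n with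
  | zero => exact monotoneOn_id
  | succ n ih =>
    intro x hx y hy hxy
    rw [iterate_succ_apply', iterate_succ_apply']
    exact hf (hs.iterate n hx) (hs.iterate n hy) (ih hx hy hxy)

theorem MonotoneOn.monotone_iterate_of_le_map (hf : MonotoneOn f s) (hs : MapsTo f s s)
    {x : α} (hx : x ∈ s) (hxf : x ≤ f x) : Monotone fun n => f^[n] x :=
  monotone_nat_of_le_succ fun n => by
    rw [iterate_succ_apply]
    exact hf.iterate hs n hx (hs hx) hxf

theorem MonotoneOn.antitone_iterate_of_map_le (hf : MonotoneOn f s) (hs : MapsTo f s s)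
    {x : α} (hx : x ∈ s) (hfx : f x ≤ x) : Antitone fun n => f^[n] x :=
  antitone_nat_of_succ_le fun n => by
    rw [iterate_succ_apply]
    exact hf.iterate hs n (hs hx) hx hfx

theorem MonotoneOn.iterate_le_of_le_of_isFixedPt (hf : MonotoneOn f s) (hs : MapsTo f s s)
    {x y : α} (hx : x ∈ s) (hy : y ∈ s) (hxy : x ≤ y) (hfy : IsFixedPt f y) (n : ℕ) :
    f^[n] x ≤ y :=
  (hf.iterate hs n hx hy hxy).trans_eq (hfy.iterate n)

theorem MonotoneOn.le_iterate_of_le_of_isFixedPt (hf : MonotoneOn f s) (hs : MapsTo f s s)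
    {x y : α} (hx : x ∈ s) (hy : y ∈ s) (hyx : y ≤ x) (hfy : IsFixedPt f y) (n : ℕ) :
    y ≤ f^[n] x :=
  (hfy.iterate n).symm.trans_le (hf.iterate hs n hy hx hyx)

end Iterate

theorem le_of_forall_one_lt_lt_mul_of_pos {a b : ℝ} (hb : 0 < b)
    (h : ∀ α : ℝ, 1 < α → a < α * b) : a ≤ b := by
  by_contra! hba
  simpa [div_mul_cancel₀ a hb.ne'] using h (a / b) ((one_lt_div hb).2 hba)

theorem norm_sub_le_norm_sub_of_le_of_le_of_le {ι : Type*} [Fintype ι] {a a' b' b : ι → ℝ}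
    (haa' : a ≤ a') (ha'b' : a' ≤ b') (hb'b : b' ≤ b) : ‖a' - b'‖ ≤ ‖a - b‖ := by
  refine (pi_norm_le_iff_of_nonneg (norm_nonneg _)).2 fun i => le_trans ?_ (norm_le_pi_norm _ i)
  simp only [Pi.sub_apply, Real.norm_eq_abs]
  rw [abs_sub_comm, abs_sub_comm (a i), abs_of_nonneg (sub_nonneg.2 (ha'b' i)),
    abs_of_nonneg (sub_nonneg.2 ((haa'.trans ha'b').trans hb'b i))]
  linarith [haa' i, hb'b i]

/-- Yates' standard interference mappings, restricted to the nonnegative orthant. -/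
structure IsStandardInterference_s17 {ι : Type*} (J : (ι → ℝ) → ι → ℝ) : Prop where
  pos : ∀ x, 0 ≤ x → ∀ i, 0 < J x i
  scal : ∀ x, 0 ≤ x → ∀ α : ℝ, 1 < α → ∀ i, J (α • x) i < α * J x i
  mono : MonotoneOn J (Ici 0)

namespace IsStandardInterference_s17

variable {ι : Type*} {J : (ι → ℝ) → ι → ℝ}

theorem mapsTo_Ici (hJ : IsStandardInterference_s17 J) : MapsTo J (Ici 0) (Ici 0) :=
  fun x hx i => (hJ.pos x hx i).le

theorem le_of_le_map_of_map_le [Finite ι] (hJ : IsStandardInterference_s17 J) {x y : ι → ℝ}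
    (hx : 0 ≤ x) (hxJ : x ≤ J x) (hy : ∀ i, 0 < y i) (hyJ : J y ≤ y) : x ≤ y := by
  intro i
  by_contra! hyx
  have : Nonempty ι := ⟨i⟩
  obtain ⟨k, hk⟩ := Finite.exists_max fun j => x j / y j
  set α := x k / y k
  have hα : 1 < α := ((one_lt_div (hy i)).2 hyx).trans_le (hk i)
  have hxα : x ≤ α • y := fun j => (div_le_iff₀ (hy j)).1 (hk j)
  have hy0 : 0 ≤ y := fun j => (hy j).le
  have : x k < x k :=
    calc x k ≤ J x k := hxJ k
      _ ≤ J (α • y) k := hJ.mono hx (hx.trans hxα) hxα k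
      _ < α * J y k := hJ.scal y hy0 α hα k
      _ ≤ α * y k := by gcongr; exact hyJ k
      _ = x k := div_mul_cancel₀ _ (hy k).ne'
  exact lt_irrefl _ this

theorem map_le_of_tendsto_of_monotone [Finite ι] (hJ : IsStandardInterference_s17 J)
    {x L : ι → ℝ} (hx : 0 ≤ x) (hmono : Monotone fun n => J^[n] x)
    (hlim : Tendsto (fun n => J^[n] x) atTop (𝓝 L)) (hL : ∀ i, 0 < L i) : J L ≤ L := by
  have hle : ∀ n, J^[n] x ≤ L := hmono.ge_of_tendsto hlim
  have hnonneg : ∀ n, 0 ≤ J^[n] x := fun n => hx.trans (hmono (Nat.zero_le n))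
  intro i
  refine le_of_forall_one_lt_lt_mul_of_pos (hL i) fun α hα => ?_
  have hev : ∀ᶠ n in atTop, ∀ j, L j ≤ α * J^[n] x j := eventually_all.2 fun j =>
    ((tendsto_pi_nhds.1 hlim j).const_mul α).eventually
      (eventually_ge_nhds (lt_mul_of_one_lt_left (hL j) hα))
  obtain ⟨n, hn⟩ := hev.exists
  calc J L i ≤ J (α • J^[n] x) i :=
        hJ.mono (fun j => (hL j).le) (fun j => (hL j).le.trans (hn j)) hn i
    _ < α * J (J^[n] x) i := hJ.scal _ (hnonneg n) α hα i
    _ = α * J^[n + 1] x i := by rw [iterate_succ_apply']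
    _ ≤ α * L i := by gcongr; exact hle (n + 1) i

theorem le_map_of_tendsto_of_antitone [Finite ι] (hJ : IsStandardInterference_s17 J)
    {x L : ι → ℝ} (hanti : Antitone fun n => J^[n] x)
    (hlim : Tendsto (fun n => J^[n] x) atTop (𝓝 L)) (hL : ∀ i, 0 < L i) : L ≤ J L := by
  have hle : ∀ n, L ≤ J^[n] x := hanti.le_of_tendsto hlim
  have hL0 : 0 ≤ L := fun j => (hL j).le
  intro i
  refine le_of_forall_one_lt_lt_mul_of_pos (hJ.pos L hL0 i) fun α hα => ?_
  have hev : ∀ᶠ n in atTop, ∀ j, J^[n] x j ≤ α * L j := eventually_all.2 fun j =>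
    (tendsto_pi_nhds.1 hlim j).eventually
      (eventually_le_nhds (lt_mul_of_one_lt_left (hL j) hα))
  obtain ⟨n, hn⟩ := hev.exists
  calc L i ≤ J^[n + 1] x i := hle (n + 1) i
    _ = J (J^[n] x) i := by rw [iterate_succ_apply']
    _ ≤ J (α • L) i := hJ.mono (hL0.trans (hle n)) (hL0.trans (hle n |>.trans hn)) hn i
    _ < α * J L i := hJ.scal L hL0 α hα i

theorem tendsto_iterate_of_le_map [Finite ι] (hJ : IsStandardInterference_s17 J)
    {xs : ι → ℝ} (hxs : ∀ i, 0 < xs i) (hfix : J xs = xs) {x : ι → ℝ} (hx : 0 ≤ x)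
    (hxJ : x ≤ J x) (hxxs : x ≤ xs) :
    Tendsto (fun n => J^[n] x) atTop (𝓝 xs) := by
  have hmono := hJ.mono.monotone_iterate_of_le_map hJ.mapsTo_Ici hx hxJ
  have hbound : ∀ n, J^[n] x ≤ xs :=
    hJ.mono.iterate_le_of_le_of_isFixedPt hJ.mapsTo_Ici hx (fun i => (hxs i).le) hxxs hfix
  have hlim := tendsto_atTop_ciSup hmono ⟨xs, forall_mem_range.2 hbound⟩
  set L := ⨆ n, J^[n] x
  have hLpos : ∀ i, 0 < L i := fun i =>
    (hJ.pos x hx i).trans_le (hmono.ge_of_tendsto hlim 1 i)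
  have hLxs : L ≤ xs := ciSup_le hbound
  have hxsL : xs ≤ L := hJ.le_of_le_map_of_map_le (fun i => (hxs i).le) hfix.ge hLpos
    (hJ.map_le_of_tendsto_of_monotone hx hmono hlim hLpos)
  rwa [le_antisymm hLxs hxsL] at hlim

theorem tendsto_iterate_of_map_le [Finite ι] (hJ : IsStandardInterference_s17 J)
    {xs : ι → ℝ} (hxs : ∀ i, 0 < xs i) (hfix : J xs = xs) {x : ι → ℝ} (hJx : J x ≤ x)
    (hxsx : xs ≤ x) :
    Tendsto (fun n => J^[n] x) atTop (𝓝 xs) := by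
  have hxs0 : 0 ≤ xs := fun i => (hxs i).le
  have hbound : ∀ n, xs ≤ J^[n] x :=
    hJ.mono.le_iterate_of_le_of_isFixedPt hJ.mapsTo_Ici (hxs0.trans hxsx) hxs0 hxsx hfix
  have hanti := hJ.mono.antitone_iterate_of_map_le hJ.mapsTo_Ici (hxs0.trans hxsx) hJx
  have hlim := tendsto_atTop_ciInf hanti ⟨xs, forall_mem_range.2 hbound⟩
  set L := ⨅ n, J^[n] x
  have hxsL : xs ≤ L := le_ciInf hbound
  have hLpos : ∀ i, 0 < L i := fun i => (hxs i).trans_le (hxsL i)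
  have hLxs : L ≤ xs := hJ.le_of_le_map_of_map_le (fun i => (hLpos i).le)
    (hJ.le_map_of_tendsto_of_antitone hanti hlim hLpos) hxs hfix.le
  rwa [le_antisymm hLxs hxsL] at hlim

end IsStandardInterference_s17

theorem bracketing_algorithm_correct (M : ℕ)
    (J : (Fin M → ℝ) → (Fin M → ℝ))
    (hpos : ∀ x : Fin M → ℝ, (∀ i, 0 ≤ x i) → ∀ i, 0 < J x i)
    (hscal : ∀ x : Fin M → ℝ, (∀ i, 0 ≤ x i) → ∀ α : ℝ, 1 < α →
      ∀ i, J (fun j => α * x j) i < α * J x i)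
    (hmono : ∀ x y : Fin M → ℝ, (∀ i, 0 ≤ y i) → (∀ i, y i ≤ x i) →
      ∀ i, J y i ≤ J x i)
    (xs : Fin M → ℝ) (hxs : ∀ i, 0 < xs i) (hfix : J xs = xs)
    (v₁ : Fin M → ℝ) (hv₁ : ∀ i, 0 ≤ v₁ i) (hv₁le : ∀ i, J v₁ i ≤ v₁ i) :
    (∀ n : ℕ, ∀ i, J^[n] (fun _ => (0:ℝ)) i ≤ xs i ∧ xs i ≤ J^[n] v₁ i) ∧
    (∀ n : ℕ,
      ‖J^[n] (fun _ => (0:ℝ)) - xs‖ ≤ ‖J^[n] (fun _ => (0:ℝ)) - J^[n] v₁‖ ∧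
      ‖J^[n] v₁ - xs‖ ≤ ‖J^[n] (fun _ => (0:ℝ)) - J^[n] v₁‖) ∧
    Antitone (fun n : ℕ => ‖J^[n] (fun _ => (0:ℝ)) - J^[n] v₁‖) ∧
    Filter.Tendsto (fun n : ℕ => ‖J^[n] (fun _ => (0:ℝ)) - J^[n] v₁‖)
      Filter.atTop (nhds 0) := by
  rw [← Pi.zero_def]
  have hJ : IsStandardInterference_s17 J :=
    ⟨hpos, hscal, fun x hx y _ hxy => hmono y x hx hxy⟩
  have hxs0 : 0 ≤ xs := fun i => (hxs i).le
  have hv₁pos : ∀ i, 0 < v₁ i := fun i => (hpos v₁ hv₁ i).trans_le (hv₁le i)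
  have hxsv₁ : xs ≤ v₁ := hJ.le_of_le_map_of_map_le hxs0 hfix.ge hv₁pos hv₁le
  have hJ0 : (0 : Fin M → ℝ) ≤ J 0 := hJ.mapsTo_Ici self_mem_Ici
  have hlow : ∀ n, J^[n] 0 ≤ xs :=
    hJ.mono.iterate_le_of_le_of_isFixedPt hJ.mapsTo_Ici self_mem_Ici hxs0 hxs0 hfix
  have hupp : ∀ n, xs ≤ J^[n] v₁ :=
    hJ.mono.le_iterate_of_le_of_isFixedPt hJ.mapsTo_Ici hv₁ hxs0 hxsv₁ hfix
  have hu := hJ.mono.monotone_iterate_of_le_map hJ.mapsTo_Ici self_mem_Ici hJ0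
  have hv := hJ.mono.antitone_iterate_of_map_le hJ.mapsTo_Ici hv₁ hv₁le
  refine ⟨fun n i => ⟨hlow n i, hupp n i⟩, fun n => ⟨?_, ?_⟩, fun m n hmn => ?_, ?_⟩
  · exact norm_sub_le_norm_sub_of_le_of_le_of_le le_rfl (hlow n) (hupp n)
  · rw [norm_sub_rev]
    exact norm_sub_le_norm_sub_of_le_of_le_of_le (hlow n) (hupp n) le_rfl
  · exact norm_sub_le_norm_sub_of_le_of_le_of_le (hu hmn) ((hlow n).trans (hupp n)) (hv hmn)
  · simpa using ((hJ.tendsto_iterate_of_le_map hxs hfix le_rfl hJ0 (hlow 0)).sub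
      (hJ.tendsto_iterate_of_map_le hxs hfix hv₁le hxsv₁)).norm
end
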